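/- Let A + B K_x be Schur and ρ(S̄) < 1 where S̄ governs ξ̃(k+1) = S̄ ξ̃(k) for k ≥ T (after a finite transient on which ξ̃ is bounded). Then under the feedback u(k) = K_x x(k) + (U − K_x X) ξ(k), the regulated output e(k) = C x(k) + F υ(k) converges to 0 as k → ∞, provided the regulator equations X S = A X + B U and 0 = C X + F hold. -/
import Mathlib


open Matrix Filter
open scoped NNReal ENNReal

/-- Spectral radius of a real square matrix, via its complex spectrum. -/
noncomputable def specRad {m : Type*} [Fintype m] [DecidableEq m]
    (A : Matrix m m ℝ) : ENNReal :=
  spectralRadius ℂ (A.map (algebraMap ℝ ℂ))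

attribute [local instance] Matrix.linftyOpSeminormedAddCommGroup
  Matrix.linftyOpNormedAddCommGroup Matrix.linftyOpNormedSpace
  Matrix.linftyOpNonUnitalSemiNormedRing Matrix.linftyOpSemiNormedRing
  Matrix.linftyOpNonUnitalNormedRing Matrix.linftyOpNormedRing
  Matrix.linftyOpNormedAlgebra

lemma nnnorm_map_algebraMap {d : ℕ} (M : Matrix (Fin d) (Fin d) ℝ) :
    ‖M.map (algebraMap ℝ ℂ)‖₊ = ‖M‖₊ := by
  simp [Matrix.linfty_opNNNorm_def, Matrix.map_apply]


lemma pow_norm_geom {d : ℕ} (M : Matrix (Fin d) (Fin d) ℝ) (h : specRad M < 1) :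
    ∃ c r : ℝ, 0 ≤ c ∧ 0 < r ∧ r < 1 ∧ ∀ k, ‖M ^ k‖ ≤ c * r ^ k := by
  haveI : CompleteSpace (Matrix (Fin d) (Fin d) ℂ) := FiniteDimensional.complete ℂ _
  set Mc := M.map (algebraMap ℝ ℂ) with hMc
  have gel := spectrum.pow_nnnorm_pow_one_div_tendsto_nhds_spectralRadius Mc
  have h' : spectralRadius ℂ Mc < 1 := h
  have hmax : max (spectralRadius ℂ Mc) 2⁻¹ < 1 := max_lt h' (by norm_num)
  obtain ⟨R, hR1, hR2⟩ := exists_between hmax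
  have hRtop : R ≠ ⊤ := (hR2.trans ENNReal.one_lt_top).ne
  set rr : ℝ≥0 := R.toNNReal with hrr
  have hRrr : (rr : ℝ≥0∞) = R := ENNReal.coe_toNNReal hRtop
  have hrr1 : rr < 1 := by
    have : (rr : ℝ≥0∞) < 1 := by rw [hRrr]; exact hR2
    exact_mod_cast this
  have hrr0 : 0 < rr := by
    refine ENNReal.toNNReal_pos ?_ hRtop
    intro h0
    rw [h0] at hR1
    exact absurd (lt_of_le_of_lt (le_max_right _ _) hR1) (by simp)
  have hev : ∀ᶠ k : ℕ in atTop, ((‖Mc ^ k‖₊ : ℝ≥0∞) : ℝ≥0∞) ^ (1 / (k : ℝ)) < R :=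
    gel.eventually_lt_const (lt_of_le_of_lt (le_max_left _ _) hR1)
  obtain ⟨N, hN⟩ := eventually_atTop.mp hev
  have hpow : ∀ k, ‖M ^ k‖₊ = ‖Mc ^ k‖₊ := by
    intro k
    rw [show Mc ^ k = (M ^ k).map (algebraMap ℝ ℂ) by
      simp only [hMc, ← RingHom.mapMatrix_apply, ← map_pow], nnnorm_map_algebraMap]
  have key : ∀ k, N + 1 ≤ k → ‖M ^ k‖₊ ≤ rr ^ k := by
    intro k hk
    have hk0 : (k : ℝ) ≠ 0 := Nat.cast_ne_zero.mpr (by omega)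
    have h1 := (hN k (by omega)).le
    have h2 : ((‖Mc ^ k‖₊ : ℝ≥0∞) ^ (1 / (k : ℝ))) ^ (k : ℝ) ≤ R ^ (k : ℝ) :=
      ENNReal.rpow_le_rpow h1 (Nat.cast_nonneg k)
    have e1 : ((‖Mc ^ k‖₊ : ℝ≥0∞) ^ (1 / (k : ℝ))) ^ (k : ℝ) = (‖Mc ^ k‖₊ : ℝ≥0∞) := by
      rw [← ENNReal.rpow_mul, one_div, inv_mul_cancel₀ hk0, ENNReal.rpow_one]
    have e2 : R ^ (k : ℝ) = ((rr ^ k : ℝ≥0) : ℝ≥0∞) := by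
      rw [ENNReal.rpow_natCast, ← hRrr, ← ENNReal.coe_pow]
    rw [e1, e2] at h2
    rw [hpow]
    exact_mod_cast h2
  refine ⟨1 + ∑ i ∈ Finset.range (N + 1), ‖M ^ i‖ / (rr : ℝ) ^ i, rr, ?_, hrr0, hrr1, ?_⟩
  · positivity
  · intro k
    have hsum_nonneg : (0:ℝ) ≤ ∑ i ∈ Finset.range (N + 1), ‖M ^ i‖ / (rr : ℝ) ^ i := by positivity
    rcases le_or_gt (N + 1) k with hk | hk
    · have := key k hk
      have h3 : ‖M ^ k‖ ≤ (rr : ℝ) ^ k := by exact_mod_cast this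
      have h4 : ((rr:ℝ)) ^ k ≤ (1 + ∑ i ∈ Finset.range (N + 1), ‖M ^ i‖ / (rr : ℝ) ^ i) * (rr:ℝ) ^ k := by
        nlinarith [pow_nonneg (le_of_lt (show (0:ℝ) < rr by exact_mod_cast hrr0)) k]
      linarith
    · have hmem : k ∈ Finset.range (N + 1) := Finset.mem_range.mpr hk
      have hle : ‖M ^ k‖ / (rr : ℝ) ^ k ≤ ∑ i ∈ Finset.range (N + 1), ‖M ^ i‖ / (rr : ℝ) ^ i :=
        Finset.single_le_sum (f := fun i => ‖M ^ i‖ / (rr : ℝ) ^ i) (fun i _ => by positivity) hmem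
      have hp : (0:ℝ) < (rr : ℝ) ^ k := by positivity
      rw [div_le_iff₀ hp] at hle
      nlinarith

lemma mulVec_sum' {m' n' : ℕ} (A : Matrix (Fin m') (Fin n') ℝ) {ι : Type*} (s : Finset ι)
    (v : ι → Fin n' → ℝ) : A.mulVec (∑ i ∈ s, v i) = ∑ i ∈ s, A.mulVec (v i) := by
  simp only [← Matrix.mulVecLin_apply]
  exact map_sum A.mulVecLin v s


/-- If A + B K_x is Schur, ρ(S̄) < 1 with ξ̃(k+1) = S̄ ξ̃(k) for
k ≥ T (after a bounded finite transient), the regulator equations hold, and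
u(k) = K_x x(k) + (U − K_x X) ξ(k), then e(k) = C x(k) + F υ(k) → 0. -/
theorem stmt8 {n m p q : ℕ}
    (A : Matrix (Fin n) (Fin n) ℝ) (B : Matrix (Fin n) (Fin m) ℝ)
    (C : Matrix (Fin p) (Fin n) ℝ) (S : Matrix (Fin q) (Fin q) ℝ)
    (Sbar : Matrix (Fin q) (Fin q) ℝ)
    (X : Matrix (Fin n) (Fin q) ℝ) (U : Matrix (Fin m) (Fin q) ℝ)
    (F : Matrix (Fin p) (Fin q) ℝ) (Kx : Matrix (Fin m) (Fin n) ℝ)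
    (hSchur : specRad (A + B * Kx) < 1) (hSbar : specRad Sbar < 1)
    (hreg1 : X * S = A * X + B * U) (hreg2 : (0 : Matrix (Fin p) (Fin q) ℝ) = C * X + F)
    (x : ℕ → Fin n → ℝ) (u : ℕ → Fin m → ℝ) (υ ξ : ℕ → Fin q → ℝ)
    (hu : ∀ k, u k = Kx.mulVec (x k) + (U - Kx * X).mulVec (ξ k))
    (hx : ∀ k, x (k + 1) = A.mulVec (x k) + B.mulVec (u k))
    (hυ : ∀ k, υ (k + 1) = S.mulVec (υ k))
    (ξt : ℕ → Fin q → ℝ) (hξt : ∀ k, ξt k = ξ k - υ k)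
    (T : ℕ)
    (htrans : ∃ Cb : ℝ, ∀ k ≤ T, ∀ i, |ξt k i| ≤ Cb)
    (hrec : ∀ k, T ≤ k → ξt (k + 1) = Sbar.mulVec (ξt k))
    (e : ℕ → Fin p → ℝ) (he : ∀ k, e k = C.mulVec (x k) + F.mulVec (υ k)) :
    Tendsto e atTop (nhds 0) := by
  classical
  have hF : F = -(C * X) := by
    have h0 : C * X + F = 0 := hreg2.symm
    have := congrArg (fun Y => Y - C * X) h0
    simpa [sub_eq_iff_eq_add] using this
  set M := A + B * Kx with hM
  set G := B * (U - Kx * X) with hG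
  set z : ℕ → Fin n → ℝ := fun k => x k - X.mulVec (υ k) with hzdef
  have he' : ∀ k, e k = C.mulVec (z k) := by
    intro k
    calc e k = C.mulVec (x k) + F.mulVec (υ k) := he k
      _ = C.mulVec (x k) - (C * X).mulVec (υ k) := by
          rw [hF, Matrix.neg_mulVec]; abel
      _ = C.mulVec (z k) := by
          rw [hzdef]; rw [Matrix.mulVec_sub, Matrix.mulVec_mulVec]
  have hz : ∀ k, z (k + 1) = M.mulVec (z k) + G.mulVec (ξt k) := by
    intro k
    have hXS : X.mulVec (S.mulVec (υ k)) = (A * X + B * U).mulVec (υ k) := by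
      rw [Matrix.mulVec_mulVec, hreg1]
    simp only [hzdef, hx, hu, hυ, hξt, hM, hG, hXS]
    simp only [Matrix.mulVec_add, Matrix.mulVec_sub, Matrix.add_mulVec, Matrix.sub_mulVec,
      Matrix.mulVec_mulVec, Matrix.mul_sub, Matrix.mul_add, Matrix.add_mul, Matrix.sub_mul,
      Matrix.mul_assoc]
    abel
  obtain ⟨c1, r1, hc1, hr1p, hr1l, hb1⟩ := pow_norm_geom M hSchur
  obtain ⟨c2, r2, hc2, hr2p, hr2l, hb2⟩ := pow_norm_geom Sbar hSbar
  set ρ := max r1 r2 with hρ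
  have hρ0 : 0 < ρ := lt_max_of_lt_left hr1p
  have hρ1 : ρ < 1 := max_lt hr1l hr2l
  have hb1' : ∀ k, ‖M ^ k‖ ≤ c1 * ρ ^ k := fun k =>
    (hb1 k).trans (by gcongr; exact le_max_left _ _)
  have hb2' : ∀ k, ‖Sbar ^ k‖ ≤ c2 * ρ ^ k := fun k =>
    (hb2 k).trans (by gcongr; exact le_max_right _ _)
  have hxi : ∀ j, ξt (T + j) = (Sbar ^ j).mulVec (ξt T) := by
    intro j
    induction j with
    | zero => simp [Matrix.one_mulVec]
    | succ j ih =>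
      rw [show T + (j + 1) = (T + j) + 1 by omega, hrec (T + j) (Nat.le_add_right T j), ih,
        Matrix.mulVec_mulVec, ← pow_succ']
  have hzf : ∀ j, z (T + j) = (M ^ j).mulVec (z T)
      + ∑ i ∈ Finset.range j, (M ^ (j - 1 - i)).mulVec (G.mulVec (ξt (T + i))) := by
    intro j
    induction j with
    | zero => simp [Matrix.one_mulVec]
    | succ j ih =>
      rw [show T + (j + 1) = (T + j) + 1 by omega, hz, ih]
      rw [Matrix.mulVec_add, mulVec_sum', Matrix.mulVec_mulVec (z T) M (M ^ j), ← pow_succ']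
      have hcong : ∀ i ∈ Finset.range j,
          M.mulVec ((M ^ (j - 1 - i)).mulVec (G.mulVec (ξt (T + i))))
            = (M ^ (j + 1 - 1 - i)).mulVec (G.mulVec (ξt (T + i))) := by
        intro i hi
        rw [Matrix.mulVec_mulVec (G.mulVec (ξt (T + i))) M (M ^ (j - 1 - i)), ← pow_succ',
          show j - 1 - i + 1 = j + 1 - 1 - i from by have := Finset.mem_range.mp hi; omega]
      rw [Finset.sum_congr rfl hcong, Finset.sum_range_succ,
        show j + 1 - 1 - j = 0 by omega, pow_zero, Matrix.one_mulVec]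
      abel
  set D := c1 * ‖G‖ * (c2 * ‖ξt T‖) with hD
  have hD0 : 0 ≤ D := by positivity
  have hnorm : ∀ j, ‖z (T + j)‖ ≤ c1 * ‖z T‖ * ρ ^ j + (D / ρ) * (j * ρ ^ j) := by
    intro j
    rw [hzf j]
    have hterm : ∀ i ∈ Finset.range j,
        ‖(M ^ (j - 1 - i)).mulVec (G.mulVec (ξt (T + i)))‖ ≤ D / ρ * ρ ^ j := by
      intro i hi
      have hij := Finset.mem_range.mp hi
      have t1 : ‖(M ^ (j - 1 - i)).mulVec (G.mulVec (ξt (T + i)))‖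
          ≤ ‖M ^ (j - 1 - i)‖ * (‖G‖ * ‖ξt (T + i)‖) := by
        refine (Matrix.linfty_opNorm_mulVec _ _).trans ?_
        gcongr
        exact Matrix.linfty_opNorm_mulVec _ _
      have t2 : ‖ξt (T + i)‖ ≤ c2 * ρ ^ i * ‖ξt T‖ := by
        rw [hxi i]
        refine (Matrix.linfty_opNorm_mulVec _ _).trans ?_
        gcongr
        exact hb2' i
      have t3 : ‖M ^ (j - 1 - i)‖ ≤ c1 * ρ ^ (j - 1 - i) := hb1' _
      have hpow : ρ ^ (j - 1 - i) * ρ ^ i * ρ = ρ ^ j := by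
        rw [← pow_add, ← pow_succ]
        congr 1
        omega
      have : ‖(M ^ (j - 1 - i)).mulVec (G.mulVec (ξt (T + i)))‖
          ≤ c1 * ρ ^ (j - 1 - i) * (‖G‖ * (c2 * ρ ^ i * ‖ξt T‖)) := by
        refine t1.trans ?_
        exact mul_le_mul t3 (mul_le_mul_of_nonneg_left t2 (norm_nonneg G))
          (by positivity) (by positivity)
      refine this.trans ?_
      rw [div_mul_eq_mul_div, le_div_iff₀ hρ0]
      refine le_of_eq ?_
      calc c1 * ρ ^ (j - 1 - i) * (‖G‖ * (c2 * ρ ^ i * ‖ξt T‖)) * ρ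
          = D * (ρ ^ (j - 1 - i) * ρ ^ i * ρ) := by rw [hD]; ring
        _ = D * ρ ^ j := by rw [hpow]
    calc ‖(M ^ j).mulVec (z T) + ∑ i ∈ Finset.range j,
          (M ^ (j - 1 - i)).mulVec (G.mulVec (ξt (T + i)))‖
        ≤ ‖(M ^ j).mulVec (z T)‖ + ∑ i ∈ Finset.range j,
          ‖(M ^ (j - 1 - i)).mulVec (G.mulVec (ξt (T + i)))‖ :=
          (norm_add_le _ _).trans (by gcongr; exact norm_sum_le _ _)
      _ ≤ c1 * ρ ^ j * ‖z T‖ + ∑ i ∈ Finset.range j, D / ρ * ρ ^ j := by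
          gcongr with i hi
          · refine (Matrix.linfty_opNorm_mulVec _ _).trans ?_
            gcongr
            exact hb1' j
          · exact hterm i hi
      _ = c1 * ‖z T‖ * ρ ^ j + (D / ρ) * (j * ρ ^ j) := by
          rw [Finset.sum_const, Finset.card_range, nsmul_eq_mul]
          ring
  have hlim : Tendsto (fun j : ℕ => c1 * ‖z T‖ * ρ ^ j + (D / ρ) * (j * ρ ^ j)) atTop (nhds 0) := by
    have t1 := (tendsto_pow_atTop_nhds_zero_of_lt_one hρ0.le hρ1).const_mul (c1 * ‖z T‖)
    have t2 := (tendsto_self_mul_const_pow_of_lt_one hρ0.le hρ1).const_mul (D / ρ)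
    simpa using t1.add t2
  have h2 : Tendsto (fun j => ‖z (T + j)‖) atTop (nhds 0) :=
    squeeze_zero (fun j => norm_nonneg _) hnorm hlim
  have h3 : Tendsto (fun j => z (T + j)) atTop (nhds 0) :=
    tendsto_zero_iff_norm_tendsto_zero.mpr h2
  have h4 : Tendsto z atTop (nhds 0) := by
    rw [← tendsto_add_atTop_iff_nat T]
    simpa [add_comm] using h3
  have h5 : Tendsto (fun k => ‖e k‖) atTop (nhds 0) := by
    refine squeeze_zero (g := fun k => ‖C‖ * ‖z k‖) (fun k => norm_nonneg _)
      (fun k => by rw [he' k]; exact Matrix.linfty_opNorm_mulVec _ _) ?_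
    simpa using (tendsto_zero_iff_norm_tendsto_zero.mp h4).const_mul ‖C‖
  exact tendsto_zero_iff_norm_tendsto_zero.mpr h5
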